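/- arXiv:1912.04738 — 2 statements merged into one kernel-verified Lean document; each statement's English description precedes it below -/
import Mathlib

section
/- The entropy-covering equivalence (second direction): if ln N(T, d, ε) < (a/ε)^q for all ε > 0 (for constants a > 0, q > 0), then e_i(T, d) ≤ 3^{1/q}·a·i^{-1/q} for all i ≥ 1. -/
/-! If `ε > 3^{1/q} a i^{-1/q}`, then `(a/ε)^q < i/3`, so the hypothesis gives a cover by fewer
than `exp (i/3)` balls of radius `ε`; and `exp (i/3) ≤ 2^{i-1} + 1` because `log 2 > 2/3`. -/

/-- `T` is coverable by `n` closed balls of radius `ε`. -/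
def coverable {X : Type*} [PseudoMetricSpace X] (T : Set X) (ε : ℝ) (n : ℕ) : Prop :=
  ∃ c : Finset X, c.card ≤ n ∧ T ⊆ ⋃ x ∈ c, Metric.closedBall x ε

lemma div_rpow_lt_of_rpow_mul_lt {a b t q ε : ℝ} (ha : 0 ≤ a) (hb : 0 < b) (ht : 0 < t)
    (hq : 0 < q) (hε : b ^ (1/q) * a * t ^ (-(1/q)) < ε) : (a / ε) ^ q < t / b := by
  have hε0 : 0 < ε := lt_of_le_of_lt (by positivity) hε
  rw [← Real.lt_rpow_inv_iff_of_pos (div_nonneg ha hε0.le) (div_pos ht hb).le hq,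
    div_lt_iff₀ hε0]
  calc a = (t / b) ^ q⁻¹ * (b ^ (1/q) * a * t ^ (-(1/q))) := by
        rw [Real.div_rpow ht.le hb.le, Real.rpow_neg ht.le, one_div]
        field_simp
    _ < (t / b) ^ q⁻¹ * ε := by gcongr

lemma exp_two_thirds_lt_two : Real.exp (2 / 3) < 2 := by
  rw [← Real.lt_log_iff_exp_lt two_pos]
  linarith [Real.log_two_gt_d9]

lemma exp_succ_div_three_le (n : ℕ) : Real.exp ((n + 1) / 3) ≤ 2 ^ n + 1 := by
  rcases Nat.eq_zero_or_pos n with rfl | hn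
  · have : Real.exp ((0 + 1) / 3) ≤ Real.exp (2 / 3) := Real.exp_le_exp.2 (by norm_num)
    linarith [exp_two_thirds_lt_two]
  · have hn' : (1 : ℝ) ≤ n := by exact_mod_cast hn
    calc Real.exp ((n + 1) / 3) ≤ Real.exp (2 / 3) ^ n := by
          rw [← Real.exp_nat_mul]; exact Real.exp_le_exp.2 (by linarith)
      _ ≤ 2 ^ n := by gcongr; exact exp_two_thirds_lt_two.le
      _ ≤ 2 ^ n + 1 := by linarith

/-- Covering numbers bound entropy numbers: if `ln N(T,d,ε) < (a/ε)^q` for all `ε > 0`,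
then `e_i(T,d) ≤ 3^{1/q} a i^{-1/q}` for all `i ≥ 1`. -/
theorem stmt6 {X : Type*} [PseudoMetricSpace X] (T : Set X) (a q : ℝ)
    (ha : 0 < a) (hq : 0 < q)
    (h : ∀ ε : ℝ, 0 < ε → ∃ c : Finset X, (c.card : ℝ) < Real.exp ((a / ε) ^ q) ∧
      T ⊆ ⋃ x ∈ c, Metric.closedBall x ε) :
    ∀ i : ℕ, 1 ≤ i → ∀ ε : ℝ, (3 : ℝ) ^ (1/q) * a * (i : ℝ) ^ (-(1/q)) < ε →
      coverable T ε (2 ^ (i - 1)) := by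
  intro i hi ε hε
  obtain ⟨n, rfl⟩ : ∃ n, i = n + 1 := ⟨i - 1, by omega⟩
  have hε0 : 0 < ε := lt_of_le_of_lt (by positivity) hε
  obtain ⟨c, hcard, hcov⟩ := h ε hε0
  refine ⟨c, ?_, hcov⟩
  have hexp : (a / ε) ^ q < ((n + 1 : ℕ) : ℝ) / 3 :=
    div_rpow_lt_of_rpow_mul_lt ha.le three_pos (by positivity) hq hε
  have hlt : (c.card : ℝ) < 2 ^ n + 1 := calc
    (c.card : ℝ) < Real.exp ((a / ε) ^ q) := hcard
    _ < Real.exp ((n + 1) / 3) := by exact_mod_cast Real.exp_lt_exp.2 hexp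
    _ ≤ 2 ^ n + 1 := exp_succ_div_three_le n
  rw [Nat.add_sub_cancel, ← Nat.lt_succ_iff]
  exact_mod_cast hlt
end

section
/- Covering number of a direct sum of RKHSs: let A, B ⊂ X be disjoint, H_A and H_B be RKHSs of functions on A and B (extended by zero to X) embedded in L₂(P_{X|A}) and L₂(P_{X|B}) respectively, and let H = Ĥ_A + Ĥ_B with norm ‖f‖²_H = λ_A‖f̂_A‖² + λ_B‖f̂_B‖² for λ_A, λ_B > 0. Then for ε_A, ε_B > 0 and ε = (ε_A² + ε_B²)^{1/2}, N(B_H, ‖·‖_{L₂(P_X)}, ε) ≤ N(λ_A^{-1/2} B_{Ĥ_A}, ‖·‖_{L₂(P_{X|A})}, ε_A) · N(λ_B^{-1/2} B_{Ĥ_B}, ‖·‖_{L₂(P_{X|B})}, ε_B). -/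
/-!
A function of the unit ball of `H` splits as `a + b` with `a` supported in `A` and `b` in `B`.
Gluing an `ε_A`-close centre `p` on `A` with an `ε_B`-close centre `q` on `B` gives the centre
`1_A p + 1_B q`; since `A` and `B` are disjoint, the squared `L₂(P)` distance to it is the sum
of the squared distances on `A` and on `B`, hence at most `ε_A² + ε_B²`. The glued centres are
indexed by pairs of centres, whence the product bound.
-/

open MeasureTheory

/-- `T` is coverable, w.r.t. a distance-like function `D`, by `n` balls of radius `ε`. -/
def coverableD {F : Type*} (D : F → F → ℝ) (T : Set F) (ε : ℝ) (n : ℕ) : Prop :=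
  ∃ c : Finset F, c.card ≤ n ∧ ∀ f ∈ T, ∃ g ∈ c, D f g ≤ ε

theorem coverableD.mul {F G H : Type*} {DF : F → F → ℝ} {DG : G → G → ℝ} {DH : H → H → ℝ}
    {S : Set F} {T : Set G} {U : Set H} {εS εT ε : ℝ} {m n : ℕ}
    (hS : coverableD DF S εS m) (hT : coverableD DG T εT n) (φ ψ : F → G → H)
    (hU : ∀ u ∈ U, ∃ a ∈ S, ∃ b ∈ T, u = φ a b)
    (hdist : ∀ a ∈ S, ∀ b ∈ T, ∀ p q, DF a p ≤ εS → DG b q ≤ εT → DH (φ a b) (ψ p q) ≤ ε) :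
    coverableD DH U ε (m * n) := by
  classical
  obtain ⟨cS, hcS_card, hcS⟩ := hS
  obtain ⟨cT, hcT_card, hcT⟩ := hT
  refine ⟨(cS ×ˢ cT).image fun pq => ψ pq.1 pq.2, ?_, ?_⟩
  · calc ((cS ×ˢ cT).image fun pq => ψ pq.1 pq.2).card ≤ (cS ×ˢ cT).card := Finset.card_image_le
      _ ≤ m * n := by rw [Finset.card_product]; exact Nat.mul_le_mul hcS_card hcT_card
  · intro u hu
    obtain ⟨a, ha, b, hb, rfl⟩ := hU u hu
    obtain ⟨p, hp, hap⟩ := hcS a ha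
    obtain ⟨q, hq, hbq⟩ := hcT b hb
    exact ⟨ψ p q, Finset.mem_image.mpr ⟨(p, q), Finset.mem_product.mpr ⟨hp, hq⟩, rfl⟩,
      hdist a ha b hb p q hap hbq⟩

section DisjointSupports

variable {X : Type*} {A B : Set X} {a b p q : X → ℝ}

theorem add_sub_indicator_add_indicator_eqOn_left (hAB : Disjoint A B) (hb : ∀ x ∉ B, b x = 0) :
    Set.EqOn (a + b - (A.indicator p + B.indicator q)) (a - p) A := by
  intro x hx
  have hxB : x ∉ B := Set.disjoint_left.mp hAB hx
  simp [hb x hxB, Set.indicator_of_mem hx, Set.indicator_of_notMem hxB]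

theorem add_sub_indicator_add_indicator_eqOn_right (hAB : Disjoint A B)
    (ha : ∀ x ∉ A, a x = 0) : Set.EqOn (a + b - (A.indicator p + B.indicator q)) (b - q) B := by
  rw [add_comm a, add_comm (A.indicator p)]
  exact add_sub_indicator_add_indicator_eqOn_left hAB.symm ha

theorem add_sub_indicator_add_indicator_eq_zero (ha : ∀ x ∉ A, a x = 0)
    (hb : ∀ x ∉ B, b x = 0) {x : X} (hx : x ∉ A ∪ B) :
    (a + b - (A.indicator p + B.indicator q)) x = 0 := by
  rw [Set.mem_union, not_or] at hx
  simp [ha x hx.1, hb x hx.2, Set.indicator_of_notMem hx.1, Set.indicator_of_notMem hx.2]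

variable [MeasurableSpace X] {μ : Measure X}

/-- No integrability is assumed: for a non-integrable `h` the left side is the junk value `0`. -/
theorem integral_le_setIntegral_add_setIntegral {h : X → ℝ} (hh : 0 ≤ h)
    (hB : MeasurableSet B) (hAB : Disjoint A B) (hzero : ∀ x ∉ A ∪ B, h x = 0) :
    ∫ x, h x ∂μ ≤ ∫ x in A, h x ∂μ + ∫ x in B, h x ∂μ := by
  by_cases hint : Integrable h μ
  · rw [← setIntegral_eq_integral_of_forall_compl_eq_zero hzero,
      setIntegral_union hAB hB hint.integrableOn hint.integrableOn]
  · rw [integral_undef hint]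
    exact add_nonneg (integral_nonneg hh) (integral_nonneg hh)

theorem sqrt_integral_sq_add_sub_indicator_add_indicator_le {εA εB : ℝ}
    (hA : MeasurableSet A) (hB : MeasurableSet B) (hAB : Disjoint A B)
    (ha : ∀ x ∉ A, a x = 0) (hb : ∀ x ∉ B, b x = 0)
    (hp : Real.sqrt (∫ x in A, (a x - p x) ^ 2 ∂μ) ≤ εA)
    (hq : Real.sqrt (∫ x in B, (b x - q x) ^ 2 ∂μ) ≤ εB) :
    Real.sqrt (∫ x, (a + b - (A.indicator p + B.indicator q)) x ^ 2 ∂μ) ≤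
      Real.sqrt (εA ^ 2 + εB ^ 2) := by
  set d := a + b - (A.indicator p + B.indicator q)
  have hdA : Set.EqOn d (a - p) A := add_sub_indicator_add_indicator_eqOn_left hAB hb
  have hdB : Set.EqOn d (b - q) B := add_sub_indicator_add_indicator_eqOn_right hAB ha
  have hd0 : ∀ x ∉ A ∪ B, d x = 0 := fun _ => add_sub_indicator_add_indicator_eq_zero ha hb
  refine Real.sqrt_le_sqrt ?_
  calc ∫ x, d x ^ 2 ∂μ ≤ (∫ x in A, d x ^ 2 ∂μ) + ∫ x in B, d x ^ 2 ∂μ :=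
        integral_le_setIntegral_add_setIntegral (fun x => sq_nonneg _) hB hAB fun x hx => by
          rw [hd0 x hx, sq, mul_zero]
    _ = (∫ x in A, (a x - p x) ^ 2 ∂μ) + ∫ x in B, (b x - q x) ^ 2 ∂μ := by
        rw [setIntegral_congr_fun hA fun x hx => congrArg (· ^ 2) (hdA hx),
          setIntegral_congr_fun hB fun x hx => congrArg (· ^ 2) (hdB hx)]
        rfl
    _ ≤ εA ^ 2 + εB ^ 2 := add_le_add (Real.sqrt_le_iff.mp hp).2 (Real.sqrt_le_iff.mp hq).2

end DisjointSupports

theorem stmt19_general {X : Type*} [MeasurableSpace X] (P : Measure X)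
    (A B : Set X) (hAmeas : MeasurableSet A) (hBmeas : MeasurableSet B) (hAB : Disjoint A B)
    (lamA lamB : ℝ)
    (UA UB BH : Set (X → ℝ))
    (hUA : ∀ g ∈ UA, ∀ x ∉ A, g x = 0)
    (hUB : ∀ g ∈ UB, ∀ x ∉ B, g x = 0)
    (hdecomp : ∀ f ∈ BH, ∃ gA ∈ UA, ∃ gB ∈ UB,
        f = (Real.sqrt lamA)⁻¹ • gA + (Real.sqrt lamB)⁻¹ • gB)
    (DA DB DX : (X → ℝ) → (X → ℝ) → ℝ)
    (hDA : ∀ f g, DA f g = Real.sqrt (∫ x in A, (f x - g x) ^ 2 ∂P))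
    (hDB : ∀ f g, DB f g = Real.sqrt (∫ x in B, (f x - g x) ^ 2 ∂P))
    (hDX : ∀ f g, DX f g = Real.sqrt (∫ x, (f x - g x) ^ 2 ∂P))
    (εA εB : ℝ) (nA nB : ℕ)
    (hcovA : coverableD DA ((fun g => (Real.sqrt lamA)⁻¹ • g) '' UA) εA nA)
    (hcovB : coverableD DB ((fun g => (Real.sqrt lamB)⁻¹ • g) '' UB) εB nB) :
    coverableD DX BH (Real.sqrt (εA ^ 2 + εB ^ 2)) (nA * nB) := by
  refine hcovA.mul hcovB (· + ·) (fun p q => A.indicator p + B.indicator q) ?_ ?_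
  · intro f hf
    obtain ⟨gA, hgA, gB, hgB, rfl⟩ := hdecomp f hf
    exact ⟨_, Set.mem_image_of_mem _ hgA, _, Set.mem_image_of_mem _ hgB, rfl⟩
  · rintro _ ⟨gA, hgA, rfl⟩ _ ⟨gB, hgB, rfl⟩ p q hp hq
    rw [hDA] at hp
    rw [hDB] at hq
    rw [hDX]
    exact sqrt_integral_sq_add_sub_indicator_add_indicator_le hAmeas hBmeas hAB
      (fun x hx => by simp [hUA gA hgA x hx]) (fun x hx => by simp [hUB gB hgB x hx]) hp hq

/-- Covering number of a direct sum of (zero-extended) RKHSs: if every `f` in the unit ball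
`B_H` decomposes as `f = λ_A^{-1/2} g_A + λ_B^{-1/2} g_B` with `g_A ∈ U_A` supported in `A`
and `g_B ∈ U_B` supported in `B`, then an `ε_A`-cover of `λ_A^{-1/2}U_A` in `L₂(P|_A)` and an
`ε_B`-cover of `λ_B^{-1/2}U_B` in `L₂(P|_B)` yield a `(ε_A² + ε_B²)^{1/2}`-cover of `B_H` in
`L₂(P)` of product cardinality. -/
theorem stmt19 {X : Type*} [MeasurableSpace X] (P : Measure X) [IsProbabilityMeasure P]
    (A B : Set X) (hAmeas : MeasurableSet A) (hBmeas : MeasurableSet B) (hAB : Disjoint A B)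
    (lamA lamB : ℝ) (hlamA : 0 < lamA) (hlamB : 0 < lamB)
    (UA UB BH : Set (X → ℝ))
    (hUA : ∀ g ∈ UA, ∀ x ∉ A, g x = 0)
    (hUB : ∀ g ∈ UB, ∀ x ∉ B, g x = 0)
    (hdecomp : ∀ f ∈ BH, ∃ gA ∈ UA, ∃ gB ∈ UB,
        f = (Real.sqrt lamA)⁻¹ • gA + (Real.sqrt lamB)⁻¹ • gB)
    (DA DB DX : (X → ℝ) → (X → ℝ) → ℝ)
    (hDA : ∀ f g, DA f g = Real.sqrt (∫ x in A, (f x - g x) ^ 2 ∂P))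
    (hDB : ∀ f g, DB f g = Real.sqrt (∫ x in B, (f x - g x) ^ 2 ∂P))
    (hDX : ∀ f g, DX f g = Real.sqrt (∫ x, (f x - g x) ^ 2 ∂P))
    (εA εB : ℝ) (hεA : 0 < εA) (hεB : 0 < εB) (nA nB : ℕ)
    (hcovA : coverableD DA ((fun g => (Real.sqrt lamA)⁻¹ • g) '' UA) εA nA)
    (hcovB : coverableD DB ((fun g => (Real.sqrt lamB)⁻¹ • g) '' UB) εB nB) :
    coverableD DX BH (Real.sqrt (εA ^ 2 + εB ^ 2)) (nA * nB) :=
  stmt19_general P A B hAmeas hBmeas hAB lamA lamB UA UB BH hUA hUB hdecomp DA DB DX hDA hDB hDX εA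
    εB nA nB hcovA hcovB
end
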